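/- Let a, b > 0 and let j > −1 and k > j + 1 be reals, and set f(s) = a·s^k and g(s) = b·s^j for s > 0. Define L(s₀) = 2∫_{s₀}^{∞} (g(s)/f(s))·f(s₀)/√(f(s)² − f(s₀)²) ds and E(s₀) = f(s₀)·L(s₀) + 2∫_{s₀}^{∞} (g(s)/f(s))·( √(f(s)² − f(s₀)²) − f(s) ) ds − 2∫_{0}^{s₀} g(s) ds. Then all these integrals converge, and for every λ > 0 and s₀ > 0 one has L(λs₀) = λ^{j+1−k}·L(s₀) and E(λs₀) = λ^{j+1}·E(s₀). Consequently the quantity E(s₀)·L(s₀)^{(j+1)/(k−j−1)} is independent of s₀, and L(s₀) → ∞ as s₀ → 0⁺. -/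

import Mathlib

/-!
Both integrands are homogeneous in `(s₀, s)`: replacing `(s₀, s)` by `(λ s₀, λ s)` multiplies the
integrand of `L` by `λ^(j-k)` and that of `E` by `λ^j`, while `g` has degree `j`. The substitution
`s = λ y` then turns `L(λ s₀)` into `λ^(j+1-k) L(s₀)` and `E(λ s₀)` into `λ^(j+1) E(s₀)`, and it
reduces convergence to the case `s₀ = 1`. There, near `s = 1` the integrand of `L` is dominated by
the derivative of `√(s^(2k) - 1) / k`, and at infinity both integrands are `O(s^(j-2k))`.
Since `L(s₀) = s₀^(j+1-k) L(1)` with `L(1) > 0` and `j + 1 - k < 0`, `L` blows up at `0⁺`, and the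
exponent `(j+1)/(k-j-1)` is exactly the one making `E · L^p` scale-invariant.
-/

open MeasureTheory Real Set Filter
open scoped Pointwise

def PosHomogeneous (f : ℝ → ℝ) (k : ℝ) : Prop :=
  ∀ ⦃lam s : ℝ⦄, 0 < lam → 0 < s → f (lam * s) = lam ^ k * f s

lemma posHomogeneous_const_mul_rpow (a k : ℝ) : PosHomogeneous (fun s => a * s ^ k) k :=
  fun lam s hlam hs => by
    simp only [mul_rpow hlam.le hs.le]
    ring

section Scaling

variable {φ ψ : ℝ → ℝ} {c d lam : ℝ}

lemma setIntegral_smul_eq_rpow_mul {S : Set ℝ} (hS : MeasurableSet S) (hlam : 0 < lam)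
    (h : ∀ s ∈ S, φ (lam * s) = lam ^ d * ψ s) :
    ∫ s in lam • S, φ s = lam ^ (d + 1) * ∫ s in S, ψ s := by
  have hsub := Measure.setIntegral_comp_smul_of_pos volume φ S hlam
  simp only [smul_eq_mul, Module.finrank_self, pow_one] at hsub
  rw [setIntegral_congr_fun hS h, integral_const_mul] at hsub
  rw [rpow_add_one hlam.ne', mul_comm _ lam, mul_assoc, hsub, mul_inv_cancel_left₀ hlam.ne']

lemma integrableOn_Ioi_of_scaling (hlam : 0 < lam)
    (h : ∀ s ∈ Ioi c, φ (lam * s) = lam ^ d * ψ s) (hψ : IntegrableOn ψ (Ioi c)) :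
    IntegrableOn φ (Ioi (lam * c)) :=
  (integrableOn_Ioi_comp_mul_left_iff φ c hlam).mp
    (IntegrableOn.congr_fun (hψ.const_mul (lam ^ d)) (fun s hs => (h s hs).symm) measurableSet_Ioi)

lemma setIntegral_Ioi_pos (hφ : IntegrableOn φ (Ioi c)) (hpos : ∀ s ∈ Ioi c, 0 < φ s) :
    0 < ∫ s in Ioi c, φ s := by
  rw [setIntegral_pos_iff_support_of_nonneg_ae
    (ae_restrict_of_forall_mem measurableSet_Ioi fun s hs => (hpos s hs).le) hφ,
    inter_eq_right.mpr fun s hs => Function.mem_support.mpr (hpos s hs).ne']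
  simp

lemma mul_rpow_eq_of_scaling {L E : ℝ → ℝ} {α β p s : ℝ} (hL : L s = s ^ α * L 1)
    (hE : E s = s ^ β * E 1) (hs : 0 < s) (hL1 : 0 ≤ L 1) (hp : β + α * p = 0) :
    E s * L s ^ p = E 1 * L 1 ^ p := by
  rw [hL, hE, mul_rpow (rpow_nonneg hs.le α) hL1, ← rpow_mul hs.le]
  have : s ^ β * s ^ (α * p) = 1 := by rw [← rpow_add hs, hp, rpow_zero]
  linear_combination (E 1 * L 1 ^ p) * this

end Scaling

noncomputable def separationIntegrand (f g : ℝ → ℝ) (s₀ s : ℝ) : ℝ :=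
  g s / f s * f s₀ / √(f s ^ 2 - f s₀ ^ 2)

noncomputable def energyIntegrand (f g : ℝ → ℝ) (s₀ s : ℝ) : ℝ :=
  g s / f s * (√(f s ^ 2 - f s₀ ^ 2) - f s)

noncomputable def separation (f g : ℝ → ℝ) (s₀ : ℝ) : ℝ :=
  2 * ∫ s in Ioi s₀, separationIntegrand f g s₀ s

noncomputable def energy (f g : ℝ → ℝ) (s₀ : ℝ) : ℝ :=
  f s₀ * separation f g s₀ + 2 * (∫ s in Ioi s₀, energyIntegrand f g s₀ s)
    - 2 * ∫ s in Ioo 0 s₀, g s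

lemma sqrt_mul_sq_sub_mul_sq {c : ℝ} (hc : 0 ≤ c) (x y : ℝ) :
    √((c * x) ^ 2 - (c * y) ^ 2) = c * √(x ^ 2 - y ^ 2) := by
  rw [show (c * x) ^ 2 - (c * y) ^ 2 = c ^ 2 * (x ^ 2 - y ^ 2) by ring,
    sqrt_mul (sq_nonneg c), sqrt_sq hc]

section Homogeneous

variable {f g : ℝ → ℝ} {j k lam s₀ s : ℝ}

lemma separationIntegrand_scale (hf : PosHomogeneous f k) (hg : PosHomogeneous g j)
    (hlam : 0 < lam) (hs₀ : 0 < s₀) (hs : 0 < s) :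
    separationIntegrand f g (lam * s₀) (lam * s)
      = lam ^ (j - k) * separationIntegrand f g s₀ s := by
  have := (rpow_pos_of_pos hlam k).ne'
  simp only [separationIntegrand, hf hlam hs₀, hf hlam hs, hg hlam hs,
    sqrt_mul_sq_sub_mul_sq (rpow_nonneg hlam.le k), rpow_sub hlam]
  field_simp

lemma energyIntegrand_scale (hf : PosHomogeneous f k) (hg : PosHomogeneous g j)
    (hlam : 0 < lam) (hs₀ : 0 < s₀) (hs : 0 < s) :
    energyIntegrand f g (lam * s₀) (lam * s) = lam ^ j * energyIntegrand f g s₀ s := by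
  have := (rpow_pos_of_pos hlam k).ne'
  simp only [energyIntegrand, hf hlam hs₀, hf hlam hs, hg hlam hs,
    sqrt_mul_sq_sub_mul_sq (rpow_nonneg hlam.le k)]
  field_simp

lemma separation_scale (hf : PosHomogeneous f k) (hg : PosHomogeneous g j)
    (hlam : 0 < lam) (hs₀ : 0 < s₀) :
    separation f g (lam * s₀) = lam ^ (j + 1 - k) * separation f g s₀ := by
  rw [separation, separation, ← LinearOrderedField.smul_Ioi hlam,
    setIntegral_smul_eq_rpow_mul measurableSet_Ioi hlam
      fun s hs => separationIntegrand_scale hf hg hlam hs₀ (hs₀.trans hs), sub_add_eq_add_sub]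
  ring

lemma energy_scale (hf : PosHomogeneous f k) (hg : PosHomogeneous g j)
    (hlam : 0 < lam) (hs₀ : 0 < s₀) :
    energy f g (lam * s₀) = lam ^ (j + 1) * energy f g s₀ := by
  have hIoo : Ioo 0 (lam * s₀) = lam • Ioo 0 s₀ := by
    rw [LinearOrderedField.smul_Ioo hlam, mul_zero]
  rw [energy, energy, separation_scale hf hg hlam hs₀, hf hlam hs₀,
    ← LinearOrderedField.smul_Ioi hlam,
    setIntegral_smul_eq_rpow_mul measurableSet_Ioi hlam
      fun s hs => energyIntegrand_scale hf hg hlam hs₀ (hs₀.trans hs), hIoo,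
    setIntegral_smul_eq_rpow_mul measurableSet_Ioo hlam fun s hs => hg hlam hs.1]
  have : lam ^ k * lam ^ (j + 1 - k) = lam ^ (j + 1) := by
    rw [← rpow_add hlam]; ring_nf
  linear_combination (f s₀ * separation f g s₀) * this

end Homogeneous

section Profiles

variable {j k s : ℝ}

lemma rpow_sub_two_mul (hs : 0 < s) : s ^ (j - 2 * k) = s ^ j / (s ^ k) ^ 2 := by
  rw [rpow_sub hs, mul_comm, rpow_mul hs.le, rpow_two]

lemma sub_sqrt_sq_sub_one_le {u : ℝ} (hu : 1 ≤ u) : u - √(u ^ 2 - 1) ≤ u⁻¹ := by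
  have hr := sq_sqrt (show 0 ≤ u ^ 2 - 1 by nlinarith)
  have hr0 := sqrt_nonneg (u ^ 2 - 1)
  have hru : √(u ^ 2 - 1) ≤ u := by nlinarith
  rw [← one_div, le_div_iff₀ (by linarith)]
  nlinarith

lemma hasDerivAt_sqrt_rpow_sq_sub_one_div (hk : 0 < k) (hs : 1 < s) :
    HasDerivAt (fun s => √((s ^ k) ^ 2 - 1) / k)
      (s ^ k * s ^ (k - 1) / √((s ^ k) ^ 2 - 1)) s := by
  have hX : 0 < (s ^ k) ^ 2 - 1 := by
    have := one_lt_rpow hs hk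
    nlinarith
  refine ((((hasDerivAt_rpow_const (p := k) (Or.inl (by linarith))).fun_pow 2).sub_const 1).sqrt
    hX.ne' |>.div_const k).congr_deriv ?_
  have := sqrt_ne_zero'.mpr hX
  push_cast
  field_simp

lemma integrableOn_separationProfile (hk : 0 < k) (hjk : j < 2 * k - 1) :
    IntegrableOn (fun s => s ^ j / s ^ k / √((s ^ k) ^ 2 - 1)) (Ioi 1) := by
  have hmeas : AEStronglyMeasurable (fun s : ℝ => s ^ j / s ^ k / √((s ^ k) ^ 2 - 1)) :=
    (by fun_prop : Measurable _).aestronglyMeasurable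
  set T : ℝ := 2 ^ k⁻¹
  have hT : 1 < T := one_lt_rpow one_lt_two (inv_pos.mpr hk)
  have hTk : T ^ k = 2 := rpow_inv_rpow zero_le_two hk.ne'
  rw [← Ioc_union_Ioi_eq_Ioi hT.le]
  refine IntegrableOn.union ?_ ?_
  · have hderiv :
        IntegrableOn (fun s => s ^ k * s ^ (k - 1) / √((s ^ k) ^ 2 - 1)) (Ioc 1 T) := by
      refine intervalIntegral.integrableOn_deriv_of_nonneg ?_
        (fun s hs => hasDerivAt_sqrt_rpow_sq_sub_one_div hk hs.1) (fun s hs => ?_)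
      · exact ((((continuous_rpow_const hk.le).pow 2).sub continuous_const).sqrt.div_const
          k).continuousOn
      · have := hs.1
        positivity
    refine hderiv.mono' hmeas.restrict (ae_restrict_of_forall_mem measurableSet_Ioc fun s hs => ?_)
    have hs0 : 0 < s := one_pos.trans hs.1
    rw [norm_of_nonneg (by positivity)]
    gcongr
    rw [div_le_iff₀ (by positivity), ← rpow_add hs0, ← rpow_add hs0]
    exact rpow_le_rpow_of_exponent_le hs.1.le (by linarith)
  · refine ((integrableOn_Ioi_rpow_of_lt (a := j - 2 * k) (by linarith)
      (one_pos.trans hT)).const_mul 2).mono' hmeas.restrict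
      (ae_restrict_of_forall_mem measurableSet_Ioi fun s hs => ?_)
    have hs0 : 0 < s := (one_pos.trans hT).trans hs
    have hsk : 2 ≤ s ^ k := hTk ▸ rpow_le_rpow (by positivity) (le_of_lt hs) hk.le
    have hsqrt : s ^ k / 2 ≤ √((s ^ k) ^ 2 - 1) := le_sqrt_of_sq_le (by nlinarith)
    rw [norm_of_nonneg (by positivity), rpow_sub_two_mul hs0]
    calc s ^ j / s ^ k / √((s ^ k) ^ 2 - 1) ≤ s ^ j / s ^ k / (s ^ k / 2) := by gcongr
      _ = 2 * (s ^ j / (s ^ k) ^ 2) := by field_simp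

lemma integrableOn_energyProfile (hk : 0 ≤ k) (hjk : j < 2 * k - 1) :
    IntegrableOn (fun s => s ^ j / s ^ k * (√((s ^ k) ^ 2 - 1) - s ^ k)) (Ioi 1) := by
  refine (integrableOn_Ioi_rpow_of_lt (a := j - 2 * k) (by linarith) one_pos).mono'
    (by fun_prop : Measurable _).aestronglyMeasurable.restrict
    (ae_restrict_of_forall_mem measurableSet_Ioi fun s hs => ?_)
  have hs0 : 0 < s := one_pos.trans hs
  have hsk : 1 ≤ s ^ k := one_le_rpow (le_of_lt hs) hk
  have hsqrt : √((s ^ k) ^ 2 - 1) ≤ s ^ k :=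
    (sqrt_le_left (by positivity)).mpr (by linarith)
  rw [norm_mul, norm_of_nonneg (by positivity), norm_of_nonpos (by linarith), neg_sub,
    rpow_sub_two_mul hs0]
  calc s ^ j / s ^ k * (s ^ k - √((s ^ k) ^ 2 - 1)) ≤ s ^ j / s ^ k * (s ^ k)⁻¹ := by
        gcongr
        exact sub_sqrt_sq_sub_one_le hsk
    _ = s ^ j / (s ^ k) ^ 2 := by field_simp

end Profiles

section PowerLaw

variable {a b j k s₀ : ℝ}

lemma separationIntegrand_const_mul_rpow_one (ha : 0 < a) (s : ℝ) :
    separationIntegrand (fun s => a * s ^ k) (fun s => b * s ^ j) 1 s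
      = b / a * (s ^ j / s ^ k / √((s ^ k) ^ 2 - 1)) := by
  rw [separationIntegrand, sqrt_mul_sq_sub_mul_sq ha.le]
  simp only [one_rpow, one_pow, mul_one]
  field_simp

lemma energyIntegrand_const_mul_rpow_one (ha : 0 < a) (s : ℝ) :
    energyIntegrand (fun s => a * s ^ k) (fun s => b * s ^ j) 1 s
      = b * (s ^ j / s ^ k * (√((s ^ k) ^ 2 - 1) - s ^ k)) := by
  rw [energyIntegrand, sqrt_mul_sq_sub_mul_sq ha.le]
  simp only [one_rpow, one_pow]
  field_simp

lemma integrableOn_separationIntegrand (ha : 0 < a) (hk : 0 < k) (hjk : j < 2 * k - 1)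
    (hs₀ : 0 < s₀) :
    IntegrableOn (separationIntegrand (fun s => a * s ^ k) (fun s => b * s ^ j) s₀) (Ioi s₀) := by
  have h1 :
      IntegrableOn (separationIntegrand (fun s => a * s ^ k) (fun s => b * s ^ j) 1) (Ioi 1) :=
    IntegrableOn.congr_fun ((integrableOn_separationProfile hk hjk).const_mul (b / a))
      (fun s _ => (separationIntegrand_const_mul_rpow_one ha s).symm) measurableSet_Ioi
  simpa using integrableOn_Ioi_of_scaling hs₀ (fun s hs => by
    simpa using separationIntegrand_scale (posHomogeneous_const_mul_rpow a k)
      (posHomogeneous_const_mul_rpow b j) hs₀ one_pos (one_pos.trans hs)) h1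

lemma integrableOn_energyIntegrand (ha : 0 < a) (hk : 0 ≤ k) (hjk : j < 2 * k - 1)
    (hs₀ : 0 < s₀) :
    IntegrableOn (energyIntegrand (fun s => a * s ^ k) (fun s => b * s ^ j) s₀) (Ioi s₀) := by
  have h1 : IntegrableOn (energyIntegrand (fun s => a * s ^ k) (fun s => b * s ^ j) 1) (Ioi 1) :=
    IntegrableOn.congr_fun ((integrableOn_energyProfile hk hjk).const_mul b)
      (fun s _ => (energyIntegrand_const_mul_rpow_one ha s).symm) measurableSet_Ioi
  simpa using integrableOn_Ioi_of_scaling hs₀ (fun s hs => by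
    simpa using energyIntegrand_scale (posHomogeneous_const_mul_rpow a k)
      (posHomogeneous_const_mul_rpow b j) hs₀ one_pos (one_pos.trans hs)) h1

lemma separation_one_pos (ha : 0 < a) (hb : 0 < b) (hk : 0 < k) (hjk : j < 2 * k - 1) :
    0 < separation (fun s => a * s ^ k) (fun s => b * s ^ j) 1 := by
  refine mul_pos two_pos (setIntegral_Ioi_pos (integrableOn_separationIntegrand ha hk hjk one_pos)
    fun s hs => ?_)
  have hs0 : 0 < s := one_pos.trans hs
  have := one_lt_rpow hs hk
  have : 0 < √((s ^ k) ^ 2 - 1) := sqrt_pos.mpr (by nlinarith)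
  rw [separationIntegrand_const_mul_rpow_one ha]
  positivity

end PowerLaw

/-- Power-law scaling of the Nambu–Goto separation and renormalized energy for
`f(s) = a·s^k`, `g(s) = b·s^j` with `a, b > 0`, `j > −1`, `k > j + 1`: all defining
integrals converge, `L(λs₀) = λ^{j+1−k}·L(s₀)`, `E(λs₀) = λ^{j+1}·E(s₀)`, the quantity
`E(s₀)·L(s₀)^{(j+1)/(k−j−1)}` is independent of `s₀`, and `L(s₀) → ∞` as `s₀ → 0⁺`. -/
theorem nambu_goto_power_law_scaling (a b j k : ℝ) (ha : 0 < a) (hb : 0 < b)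
    (hj : -1 < j) (hk : j + 1 < k) (f g L E : ℝ → ℝ)
    (hf : ∀ s, f s = a * s ^ k) (hg : ∀ s, g s = b * s ^ j)
    (hL : ∀ s₀, L s₀ = 2 * ∫ s in Ioi s₀,
      (g s / f s) * f s₀ / Real.sqrt ((f s) ^ 2 - (f s₀) ^ 2))
    (hE : ∀ s₀, E s₀ = f s₀ * L s₀
      + 2 * (∫ s in Ioi s₀, (g s / f s) * (Real.sqrt ((f s) ^ 2 - (f s₀) ^ 2) - f s))
      - 2 * ∫ s in Ioo 0 s₀, g s) :
    (∀ s₀ : ℝ, 0 < s₀ →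
      IntegrableOn (fun s => (g s / f s) * f s₀ / Real.sqrt ((f s) ^ 2 - (f s₀) ^ 2))
          (Ioi s₀) ∧
      IntegrableOn (fun s => (g s / f s) * (Real.sqrt ((f s) ^ 2 - (f s₀) ^ 2) - f s))
          (Ioi s₀) ∧
      IntegrableOn g (Ioo 0 s₀)) ∧
    (∀ lam : ℝ, 0 < lam → ∀ s₀ : ℝ, 0 < s₀ →
      L (lam * s₀) = lam ^ (j + 1 - k) * L s₀ ∧
      E (lam * s₀) = lam ^ (j + 1) * E s₀) ∧
    (∀ s₀ s₁ : ℝ, 0 < s₀ → 0 < s₁ →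
      E s₀ * L s₀ ^ ((j + 1) / (k - j - 1)) = E s₁ * L s₁ ^ ((j + 1) / (k - j - 1))) ∧
    Tendsto L (nhdsWithin 0 (Ioi 0)) atTop := by
  obtain rfl : f = fun s => a * s ^ k := funext hf
  obtain rfl : g = fun s => b * s ^ j := funext hg
  obtain rfl : L = separation _ _ := funext hL
  obtain rfl : E = energy _ _ := funext hE
  have hk0 : 0 < k := by linarith
  have hjk : j < 2 * k - 1 := by linarith
  have hfk := posHomogeneous_const_mul_rpow a k
  have hgj := posHomogeneous_const_mul_rpow b j
  have hL1 := separation_one_pos ha hb hk0 hjk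
  have hLs : ∀ s₀ > 0, separation _ _ s₀ = s₀ ^ (j + 1 - k) * separation _ _ 1 :=
    fun s₀ hs₀ => by simpa using separation_scale hfk hgj hs₀ one_pos
  have hEs : ∀ s₀ > 0, energy _ _ s₀ = s₀ ^ (j + 1) * energy _ _ 1 :=
    fun s₀ hs₀ => by simpa using energy_scale hfk hgj hs₀ one_pos
  have hp : j + 1 + (j + 1 - k) * ((j + 1) / (k - j - 1)) = 0 := by
    field_simp [show k - j - 1 ≠ 0 by linarith]
    ring
  refine ⟨fun s₀ hs₀ => ⟨integrableOn_separationIntegrand ha hk0 hjk hs₀,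
      integrableOn_energyIntegrand ha hk0.le hjk hs₀,
      ((intervalIntegral.integrableOn_Ioo_rpow_iff hs₀).mpr hj).const_mul b⟩,
    fun lam hlam s₀ hs₀ => ⟨separation_scale hfk hgj hlam hs₀, energy_scale hfk hgj hlam hs₀⟩,
    fun s₀ s₁ hs₀ hs₁ => ?_, ?_⟩
  · rw [mul_rpow_eq_of_scaling (hLs s₀ hs₀) (hEs s₀ hs₀) hs₀ hL1.le hp,
      mul_rpow_eq_of_scaling (hLs s₁ hs₁) (hEs s₁ hs₁) hs₁ hL1.le hp]
  · refine ((tendsto_rpow_neg_nhdsGT_zero (y := j + 1 - k) (by linarith)).atTop_mul_const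
      hL1).congr' ?_
    filter_upwards [self_mem_nhdsWithin] with s₀ hs₀
    exact (hLs s₀ hs₀).symm
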